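/- arXiv:1604.07166 — 4 statements merged into one kernel-verified Lean document; each statement's English description precedes it below -/
import Mathlib

section
/- Let 0.5 < f < 1 and q ∈ (0,1), and let X = Bin((1-f)i, q) - Bin(fi, q) be the difference of two independent binomial random variables. Then Pr[X ≥ 0] ≤ exp(-q·i·(√f - √(1-f))²). -/
/-!
Exponential tilting: on the event `l₁ ≤ l₂` the weight `t⁻¹ ^ l₁ * t ^ l₂` is at least `1` for
every `t ≥ 1`, so the probability is at most the product of the two binomial moment generating
functions, `(q t⁻¹ + 1 - q) ^ a (q t + 1 - q) ^ b ≤ exp (q a (t⁻¹ - 1) + q b (t - 1))`.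
The choice `t = √f / √(1 - f)` makes the exponent `-q i (√f - √(1 - f)) ^ 2`.
-/

open Finset Real

noncomputable def binomTerm (n : ℕ) (q : ℝ) (l : ℕ) : ℝ := n.choose l * q ^ l * (1 - q) ^ (n - l)

lemma binomTerm_nonneg (n : ℕ) {q : ℝ} (hq0 : 0 ≤ q) (hq1 : q ≤ 1) (l : ℕ) :
    0 ≤ binomTerm n q l := by
  unfold binomTerm
  have : 0 ≤ 1 - q := by linarith
  positivity

lemma sum_binomTerm_mul_pow (n : ℕ) (q t : ℝ) :
    ∑ l ∈ range (n + 1), binomTerm n q l * t ^ l = (q * t + (1 - q)) ^ n := by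
  rw [add_pow]
  refine sum_congr rfl fun l _ => ?_
  rw [binomTerm, mul_pow]
  ring

lemma one_le_inv_pow_mul_pow {t : ℝ} (ht : 1 ≤ t) {m n : ℕ} (hmn : m ≤ n) :
    1 ≤ t⁻¹ ^ m * t ^ n := by
  rw [inv_pow, mul_comm, ← pow_sub₀ t (by positivity) hmn]
  exact one_le_pow₀ ht

lemma sum_ite_le_binomTerm_mul_le_pow_mul_pow {q t : ℝ} (hq0 : 0 ≤ q) (hq1 : q ≤ 1)
    (ht : 1 ≤ t) (a b : ℕ) :
    ∑ l₁ ∈ range (a + 1), ∑ l₂ ∈ range (b + 1),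
        (if l₁ ≤ l₂ then binomTerm a q l₁ * binomTerm b q l₂ else 0)
      ≤ (q * t⁻¹ + (1 - q)) ^ a * (q * t + (1 - q)) ^ b := by
  rw [← sum_binomTerm_mul_pow, ← sum_binomTerm_mul_pow, sum_mul_sum]
  gcongr with l₁ _ l₂ _
  have hP := binomTerm_nonneg a hq0 hq1 l₁
  have hQ := binomTerm_nonneg b hq0 hq1 l₂
  split_ifs with h
  · calc binomTerm a q l₁ * binomTerm b q l₂
        ≤ binomTerm a q l₁ * binomTerm b q l₂ * (t⁻¹ ^ l₁ * t ^ l₂) :=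
          le_mul_of_one_le_right (by positivity) (one_le_inv_pow_mul_pow ht h)
      _ = binomTerm a q l₁ * t⁻¹ ^ l₁ * (binomTerm b q l₂ * t ^ l₂) := by ring
  · have : 0 < t := by linarith
    positivity

lemma pow_mgf_le_exp {q s : ℝ} (h : 0 ≤ q * s + (1 - q)) (n : ℕ) :
    (q * s + (1 - q)) ^ n ≤ exp (n * (q * (s - 1))) := by
  rw [exp_nat_mul]
  exact pow_le_pow_left₀ h (by linarith [add_one_le_exp (q * (s - 1))]) n

lemma tilt_exponent_eq {f : ℝ} (hf0 : 0 < f) (hf1 : f < 1) (i : ℝ) :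
    f * i * (√(1 - f) / √f - 1) + (1 - f) * i * (√f / √(1 - f) - 1)
      = -(i * (√f - √(1 - f)) ^ 2) := by
  have hu : 0 < √f := sqrt_pos.2 hf0
  have hv : 0 < √(1 - f) := sqrt_pos.2 (by linarith)
  have hu2 : √f ^ 2 = f := sq_sqrt hf0.le
  have hv2 : √(1 - f) ^ 2 = 1 - f := sq_sqrt (by linarith)
  field_simp
  linear_combination i * √(1 - f) * (√f - √(1 - f)) * hu2
    - i * √f * (√f - √(1 - f)) * hv2

theorem stmt_0_general (f q : ℝ) (hf : 1/2 < f) (hf1 : f < 1) (hq : 0 < q) (hq1 : q < 1)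
    (i a b : ℕ) (ha : (a : ℝ) = f * i) (hb : (b : ℝ) = (1 - f) * i) :
    ∑ l₁ ∈ Finset.range (a + 1), ∑ l₂ ∈ Finset.range (b + 1),
      (if l₁ ≤ l₂ then
        ((a.choose l₁ : ℝ) * q ^ l₁ * (1 - q) ^ (a - l₁)) *
        ((b.choose l₂ : ℝ) * q ^ l₂ * (1 - q) ^ (b - l₂)) else 0)
      ≤ Real.exp (-(q * i * (Real.sqrt f - Real.sqrt (1 - f)) ^ 2)) := by
  set t := √f / √(1 - f)
  have hv : 0 < √(1 - f) := sqrt_pos.2 (by linarith)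
  have ht : 1 ≤ t := (one_le_div hv).2 (sqrt_le_sqrt (by linarith))
  have ht_inv : t⁻¹ = √(1 - f) / √f := inv_div _ _
  have hmgf (s : ℝ) (hs : 0 ≤ s) : 0 ≤ q * s + (1 - q) := by nlinarith
  calc _ ≤ (q * t⁻¹ + (1 - q)) ^ a * (q * t + (1 - q)) ^ b :=
        sum_ite_le_binomTerm_mul_le_pow_mul_pow hq.le hq1.le ht a b
    _ ≤ exp (a * (q * (t⁻¹ - 1))) * exp (b * (q * (t - 1))) :=
        mul_le_mul (pow_mgf_le_exp (hmgf _ (by positivity)) a)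
          (pow_mgf_le_exp (hmgf _ (by positivity)) b) (by positivity) (by positivity)
    _ = exp (-(q * i * (√f - √(1 - f)) ^ 2)) := by
        rw [← exp_add, ht_inv, ha, hb]
        congr 1
        linear_combination q * tilt_exponent_eq (by linarith) hf1 i

/-- Chernoff-type bound for the difference of two binomials. -/
theorem stmt_0 (f q : ℝ) (hf : 1/2 < f) (hf1 : f < 1) (hq : 0 < q) (hq1 : q < 1)
    (i a b : ℕ) (hi : 0 < i) (ha : (a : ℝ) = f * i) (hb : (b : ℝ) = (1 - f) * i) :
    ∑ l₁ ∈ Finset.range (a + 1), ∑ l₂ ∈ Finset.range (b + 1),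
      (if l₁ ≤ l₂ then
        ((a.choose l₁ : ℝ) * q ^ l₁ * (1 - q) ^ (a - l₁)) *
        ((b.choose l₂ : ℝ) * q ^ l₂ * (1 - q) ^ (b - l₂)) else 0)
      ≤ Real.exp (-(q * i * (Real.sqrt f - Real.sqrt (1 - f)) ^ 2)) :=
  stmt_0_general f q hf hf1 hq hq1 i a b ha hb
end

section
/- Let m₁ ≥ m₂ ≥ 0 be integers with m₁ > m₂, and let f ∈ (0.5, 1) with fi, (1-f)i positive integers (i a positive integer). Then the ratio C(fi, m₁)·C((1-f)i, m₂) / (C(fi, m₂)·C((1-f)i, m₁)) ≥ (f/(1-f))^{m₁-m₂}, provided m₁ ≤ (1-f)i. -/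
lemma stmt_4_aux (a b m₂ : ℕ) (hba : b ≤ a) (m : ℕ) (h2 : m₂ ≤ m) (h3 : m ≤ b) :
    a ^ (m - m₂) * (a.choose m₂ * b.choose m) ≤ b ^ (m - m₂) * (a.choose m * b.choose m₂) := by
  revert h3
  induction m, h2 using Nat.le_induction with
  | base => intro _; simp [Nat.sub_self, mul_comm]
  | succ n hn ih =>
    intro h3
    have hnb : n < b := h3
    have ih' := ih hnb.le
    have key : a * (b - n) ≤ b * (a - n) := by
      have hna : n ≤ a := le_trans hnb.le hba
      zify [hnb.le, hna]
      nlinarith [Nat.mul_le_mul_right n hba]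
    have e1 : b.choose (n+1) * (n+1) = b.choose n * (b - n) := Nat.choose_succ_right_eq b n
    have e2 : a.choose (n+1) * (n+1) = a.choose n * (a - n) := Nat.choose_succ_right_eq a n
    have hs : n + 1 - m₂ = (n - m₂) + 1 := by omega
    apply Nat.le_of_mul_le_mul_right _ (Nat.succ_pos n)
    calc a ^ (n+1-m₂) * (a.choose m₂ * b.choose (n+1)) * (n+1)
        = a ^ (n-m₂) * a * (a.choose m₂ * (b.choose (n+1) * (n+1))) := by
          rw [hs, pow_succ]; ring
      _ = (a * (b - n)) * (a ^ (n-m₂) * (a.choose m₂ * b.choose n)) := by rw [e1]; ring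
      _ ≤ (b * (a - n)) * (b ^ (n-m₂) * (a.choose n * b.choose m₂)) := Nat.mul_le_mul key ih'
      _ = b ^ (n-m₂) * b * ((a.choose n * (a - n)) * b.choose m₂) := by ring
      _ = b ^ (n+1-m₂) * (a.choose (n+1) * b.choose m₂) * (n+1) := by
          rw [hs, pow_succ, ← e2]; ring

/-- binomial coefficient ratio bound. -/
theorem stmt_4 (f : ℝ) (hf : 1/2 < f) (hf1 : f < 1) (i a b : ℕ) (hi : 0 < i)
    (ha : (a : ℝ) = f * i) (hb : (b : ℝ) = (1 - f) * i) (hb0 : 0 < b)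
    (m₁ m₂ : ℕ) (hm : m₂ < m₁) (hm₁ : m₁ ≤ b) :
    (f / (1 - f)) ^ (m₁ - m₂) ≤
      ((a.choose m₁ : ℝ) * (b.choose m₂)) / ((a.choose m₂ : ℝ) * (b.choose m₁)) := by
  have hi' : (0:ℝ) < i := by exact_mod_cast hi
  have h1f : (0:ℝ) < 1 - f := by linarith
  have hba : (b:ℝ) < a := by
    rw [ha, hb]
    apply mul_lt_mul_of_pos_right _ hi'
    linarith
  have hba' : b ≤ a := by exact_mod_cast hba.le
  have hbR : (0:ℝ) < b := by exact_mod_cast hb0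
  have hfb : f / (1 - f) = (a:ℝ) / b := by
    rw [ha, hb, mul_div_mul_right _ _ (ne_of_gt hi')]
  have hc2a : 0 < a.choose m₂ := Nat.choose_pos (le_trans (le_of_lt (lt_of_lt_of_le hm hm₁)) hba')
  have hc1b : 0 < b.choose m₁ := Nat.choose_pos hm₁
  have hc2aR : (0:ℝ) < a.choose m₂ := by exact_mod_cast hc2a
  have hc1bR : (0:ℝ) < b.choose m₁ := by exact_mod_cast hc1b
  rw [hfb, div_pow, div_le_div_iff₀ (by positivity) (by positivity)]
  have key := stmt_4_aux a b m₂ hba' m₁ hm.le hm₁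
  have keyR : (a:ℝ) ^ (m₁ - m₂) * (a.choose m₂ * b.choose m₁) ≤
      (b:ℝ) ^ (m₁ - m₂) * (a.choose m₁ * b.choose m₂) := by exact_mod_cast key
  nlinarith [keyR]
end

section
/- Let X = Bin(a, q) - Bin(b, q) with a > b ≥ 0 and independent binomials, q ∈ (0,1). Then Pr[X ≥ 2] ≥ (min over valid l₁ > l₂+1 of C(a,l₁)C(b,l₂)/(C(a,l₂)C(b,l₁))) · Pr[X ≤ -2]. -/
open Finset

/-- Pr[X ≥ 2] dominates (min ratio)·Pr[X ≤ -2] for X = Bin(a,q) - Bin(b,q). -/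
theorem stmt_5 (q : ℝ) (hq : 0 < q) (hq1 : q < 1) (a b : ℕ) (hab : b < a)
    (c : ℝ)
    (hc : ∀ l₁ l₂ : ℕ, l₂ + 2 ≤ l₁ → l₁ ≤ b →
      c ≤ ((a.choose l₁ : ℝ) * (b.choose l₂)) / ((a.choose l₂ : ℝ) * (b.choose l₁))) :
    c * (∑ l₁ ∈ Finset.range (a + 1), ∑ l₂ ∈ Finset.range (b + 1),
        (if l₁ + 2 ≤ l₂ then
          ((a.choose l₁ : ℝ) * q ^ l₁ * (1 - q) ^ (a - l₁)) *
          ((b.choose l₂ : ℝ) * q ^ l₂ * (1 - q) ^ (b - l₂)) else 0))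
      ≤ ∑ l₁ ∈ Finset.range (a + 1), ∑ l₂ ∈ Finset.range (b + 1),
        (if l₂ + 2 ≤ l₁ then
          ((a.choose l₁ : ℝ) * q ^ l₁ * (1 - q) ^ (a - l₁)) *
          ((b.choose l₂ : ℝ) * q ^ l₂ * (1 - q) ^ (b - l₂)) else 0) := by
  have h1q : (0:ℝ) < 1 - q := by linarith
  set A : ℕ → ℝ := fun l => (a.choose l : ℝ) * q ^ l * (1 - q) ^ (a - l) with hA
  set B : ℕ → ℝ := fun l => (b.choose l : ℝ) * q ^ l * (1 - q) ^ (b - l) with hB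
  -- key termwise inequality
  have key : ∀ l₁ l₂ : ℕ, l₁ + 2 ≤ l₂ → l₂ ≤ b → c * (A l₁ * B l₂) ≤ A l₂ * B l₁ := by
    intro l₁ l₂ h2 hl2
    have hcc := hc l₂ l₁ h2 hl2
    have hc1 : (0:ℝ) < (a.choose l₁ : ℝ) := by
      exact_mod_cast Nat.choose_pos (by omega)
    have hc2 : (0:ℝ) < (b.choose l₂ : ℝ) := by exact_mod_cast Nat.choose_pos hl2
    have hD1 : (0:ℝ) < (a.choose l₁ : ℝ) * (b.choose l₂) := by positivity
    have hW : (0:ℝ) < q ^ (l₁+l₂) * (1-q) ^ ((a-l₁)+(b-l₂)) := by positivity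
    have hcD : c * ((a.choose l₁ : ℝ) * (b.choose l₂)) ≤ (a.choose l₂ : ℝ) * (b.choose l₁) :=
      (le_div_iff₀ hD1).mp hcc
    have e1 : A l₁ * B l₂ =
        ((a.choose l₁:ℝ)*(b.choose l₂)) * (q ^ (l₁+l₂) * (1-q)^((a-l₁)+(b-l₂))) := by
      simp only [hA, hB, pow_add]; ring
    have e2 : A l₂ * B l₁ =
        ((a.choose l₂:ℝ)*(b.choose l₁)) * (q ^ (l₁+l₂) * (1-q)^((a-l₁)+(b-l₂))) := by
      have hex : (a-l₂)+(b-l₁) = (a-l₁)+(b-l₂) := by omega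
      simp only [hA, hB]
      rw [show q ^ (l₁+l₂) = q ^ l₂ * q ^ l₁ by rw [pow_add]; ring,
        ← hex, pow_add]
      ring
    rw [e1, e2]
    nlinarith [hW, hcD]
  -- rewrite double sums as sums over product set
  rw [← Finset.sum_product' (f := fun l₁ l₂ => if l₁ + 2 ≤ l₂ then A l₁ * B l₂ else 0),
      ← Finset.sum_product' (f := fun l₁ l₂ => if l₂ + 2 ≤ l₁ then A l₁ * B l₂ else 0)]
  set S := Finset.range (a+1) ×ˢ Finset.range (b+1) with hS
  rw [Finset.mul_sum]
  calc ∑ p ∈ S, c * (if p.1 + 2 ≤ p.2 then A p.1 * B p.2 else 0)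
      = ∑ p ∈ S.filter (fun p => p.1 + 2 ≤ p.2), c * (A p.1 * B p.2) := by
        rw [Finset.sum_filter]
        exact Finset.sum_congr rfl (fun p _ => by split <;> simp
        )
    _ ≤ ∑ p ∈ S.filter (fun p => p.1 + 2 ≤ p.2), A p.2 * B p.1 := by
        apply Finset.sum_le_sum
        intro p hp
        simp only [Finset.mem_filter, hS, Finset.mem_product, Finset.mem_range] at hp
        exact key p.1 p.2 hp.2 (by omega)
    _ = ∑ p ∈ (S.filter (fun p => p.1 + 2 ≤ p.2)).image Prod.swap, A p.1 * B p.2 := by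
        rw [Finset.sum_image (by intro x _ y _ h; exact Prod.swap_injective h)]
        simp
    _ ≤ ∑ p ∈ S.filter (fun p => p.2 + 2 ≤ p.1), A p.1 * B p.2 := by
        apply Finset.sum_le_sum_of_subset_of_nonneg
        · intro p hp
          simp only [Finset.mem_image, Finset.mem_filter, hS, Finset.mem_product,
            Finset.mem_range] at hp ⊢
          obtain ⟨x, ⟨⟨hx1, hx2⟩, hx3⟩, hswap⟩ := hp
          subst hswap
          simp only [Prod.fst_swap, Prod.snd_swap]
          exact ⟨⟨by omega, by omega⟩, hx3⟩
        · intro p hp _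
          have h1 : (0:ℝ) ≤ A p.1 := by simp only [hA]; positivity
          have h2 : (0:ℝ) ≤ B p.2 := by simp only [hB]; positivity
          exact mul_nonneg h1 h2
    _ = ∑ p ∈ S, (if p.2 + 2 ≤ p.1 then A p.1 * B p.2 else 0) := by
        rw [Finset.sum_filter]
end

section
/- If for a constant C > 0 the equation (n - 2k - 3)·(4p(1-p))^k/√(πk) = C holds, then k = log_s(n) - (1/2)·log_s(log_s n) + O(1), where s = 1/(4p(1-p)). -/
/-!
Write `s = 1 / (4p(1-p)) > 1`. Taking logarithms, the equation becomes
`k log s = log (n - 2k - 3) - log C₀ - log (π k) / 2`. Crude bounds from this give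
`log_s n / 4 ≤ k ≤ c log_s n` for large `n`; in particular `2k + 3 = o(n)`, so
`n - 2k - 3 ∈ [n/2, n]`. Substituting back, `k log s - log n + log (log_s n) / 2` is a
combination of logarithms of ratios confined to fixed compact subintervals of `(0, ∞)`.
-/

open Real Filter Asymptotics

lemma abs_log_sub_log_le_of_mem_Icc {u v a c : ℝ} (ha : 0 < a) (hv : 0 < v)
    (hau : a * v ≤ u) (huc : u ≤ c * v) : |log u - log v| ≤ |log a| + |log c| := by
  have hu : 0 < u := lt_of_lt_of_le (mul_pos ha hv) hau
  have hac : a ≤ c := le_of_mul_le_mul_right (hau.trans huc) hv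
  have hlo : log a + log v ≤ log u := by
    rw [← log_mul ha.ne' hv.ne']; exact log_le_log (mul_pos ha hv) hau
  have hhi : log u ≤ log c + log v := by
    rw [← log_mul (ha.trans_le hac).ne' hv.ne']; exact log_le_log hu huc
  rw [abs_le]
  constructor <;> linarith [neg_abs_le (log a), le_abs_self (log a), neg_abs_le (log c),
    le_abs_self (log c)]

lemma eventually_mul_log_add_le_mul (a c : ℝ) {ε : ℝ} (hε : 0 < ε) :
    ∀ᶠ x : ℝ in atTop, a * log x + c ≤ ε * x := by
  have h : (fun x => a * log x + c) =o[atTop] id :=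
    (isLittleO_log_id_atTop.const_mul_left a).add (isLittleO_const_id_atTop c)
  filter_upwards [h.def hε, eventually_ge_atTop 0] with x hx hx0
  simp only [norm_eq_abs, id, abs_of_nonneg hx0] at hx
  exact (le_abs_self _).trans hx

lemma log_form_of_mul_pow_div_sqrt_eq {q n C₀ : ℝ} {k : ℕ} (hq : 0 < q) (hk : 1 ≤ k)
    (hC₀ : 0 < C₀) (h : (n - 2 * k - 3) * q ^ k / √(π * k) = C₀) :
    0 < n - 2 * k - 3 ∧
      k * log (1 / q) = log (n - 2 * k - 3) - log C₀ - log (π * k) / 2 := by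
  have hπk : 0 < π * k := mul_pos pi_pos (by exact_mod_cast hk)
  have hqk : 0 < q ^ k / √(π * k) := div_pos (pow_pos hq k) (sqrt_pos.mpr hπk)
  have hA : 0 < n - 2 * k - 3 := by
    rw [← h, mul_div_assoc] at hC₀; exact pos_of_mul_pos_left hC₀ hqk.le
  refine ⟨hA, ?_⟩
  rw [← h, mul_div_assoc, log_mul hA.ne' hqk.ne',
    log_div (pow_pos hq k).ne' (sqrt_pos.mpr hπk).ne', log_pow, log_sqrt hπk.le, one_div, log_inv]
  ring

section LogForm

variable {b C₀ n k : ℝ}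

lemma le_of_log_form (hb : 0 < b) (hk : 1 ≤ k) (hA : 0 < n - 2 * k - 3)
    (heq : k * b = log (n - 2 * k - 3) - log C₀ - log (π * k) / 2) :
    k ≤ (log n - (log C₀ + log π / 2)) / b := by
  have hn : log (n - 2 * k - 3) ≤ log n := log_le_log hA (by linarith)
  have hπk : log π ≤ log (π * k) := log_le_log pi_pos (le_mul_of_one_le_right pi_pos.le hk)
  rw [le_div_iff₀ hb]
  linarith

lemma ge_of_log_form (hb : 0 < b) (hk : 1 ≤ k)
    (heq : k * b = log (n - 2 * k - 3) - log C₀ - log (π * k) / 2)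
    (hhalf : n / 2 ≤ n - 2 * k - 3) :
    (log n / 2 - (log 2 + log C₀ + log π / 2)) / b ≤ k := by
  have hn : 0 < n := by linarith
  have hA' : log n - log 2 ≤ log (n - 2 * k - 3) := by
    rw [← log_div hn.ne' two_ne_zero]; exact log_le_log (by positivity) hhalf
  have hπk : log (π * k) ≤ log π + log n := by
    rw [← log_mul pi_pos.ne' hn.ne']
    exact log_le_log (by positivity) (mul_le_mul_of_nonneg_left (by linarith) pi_pos.le)
  rw [div_le_iff₀ hb]
  linarith

lemma abs_sub_le_of_log_form {a c : ℝ} (hb : 0 < b)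
    (heq : k * b = log (n - 2 * k - 3) - log C₀ - log (π * k) / 2)
    (hn : 0 < log n) (hhalf : n / 2 ≤ n - 2 * k - 3) (ha : 0 < a)
    (hlo : a * (log n / b) ≤ k) (hhi : k ≤ c * (log n / b)) :
    |k - (log n / b - log (log n / b) / b / 2)|
      ≤ (log 2 + |log C₀| + (|log (π * a)| + |log (π * c)|) / 2) / b := by
  set L := log n / b
  have hL : 0 < L := div_pos hn hb
  have hk : 0 < k := (mul_pos ha hL).trans_le hlo
  have hn0 : 0 < n := by linarith
  have hA' : |log (n - 2 * k - 3) - log n| ≤ log 2 := by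
    have h := abs_log_sub_log_le_of_mem_Icc (u := n - 2 * k - 3) (a := 1 / 2) (c := 1)
      (by norm_num) hn0 (by linarith) (by linarith)
    simpa [abs_of_pos (log_pos one_lt_two)] using h
  have hπk : |log (π * k) - log L| ≤ |log (π * a)| + |log (π * c)| :=
    abs_log_sub_log_le_of_mem_Icc (mul_pos pi_pos ha) hL (by nlinarith [pi_pos])
      (by nlinarith [pi_pos])
  have hid : (k - (L - log L / b / 2)) * b
      = (log (n - 2 * k - 3) - log n) - log C₀ - (log (π * k) - log L) / 2 := by
    have hLb : L * b = log n := div_mul_cancel₀ _ hb.ne'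
    have hLb' : log L / b / 2 * b = log L / 2 := by field_simp
    linear_combination heq - hLb + hLb'
  rw [le_div_iff₀ hb, ← abs_of_pos hb, ← abs_mul, abs_of_pos hb, hid]
  refine (abs_sub _ _).trans ?_
  refine add_le_add ((abs_sub _ _).trans (add_le_add hA' le_rfl)) ?_
  rw [abs_div, abs_two]
  linarith

lemma exists_eventually_bounds_of_log_form (hb : 0 < b) (C₀ : ℝ) :
    ∃ c, ∀ᶠ n : ℝ in atTop, ∀ k, 1 ≤ k → 0 < n - 2 * k - 3 →
      k * b = log (n - 2 * k - 3) - log C₀ - log (π * k) / 2 →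
      n / 2 ≤ n - 2 * k - 3 ∧ 1 / 4 * (log n / b) ≤ k ∧ k ≤ c * (log n / b) := by
  obtain ⟨d, hd⟩ : ∃ d, log C₀ + log π / 2 = d := ⟨_, rfl⟩
  refine ⟨1 + |d| / b, ?_⟩
  filter_upwards [tendsto_log_atTop.eventually_ge_atTop (b + 4 * |log 2 + d|),
    eventually_mul_log_add_le_mul (2 / b) (3 - 2 * d / b) (by norm_num : (0 : ℝ) < 1 / 2)]
    with n hlog hsmall k hk hA heq
  have hup := le_of_log_form hb hk hA heq
  rw [hd] at hup
  have hhalf : n / 2 ≤ n - 2 * k - 3 := by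
    have : 2 * ((log n - d) / b) = 2 / b * log n - 2 * d / b := by ring
    linarith
  have hlo := ge_of_log_form hb hk heq hhalf
  rw [add_assoc, hd] at hlo
  have hL : 1 ≤ log n / b := by
    rw [le_div_iff₀ hb]; linarith [abs_nonneg (log 2 + d)]
  refine ⟨hhalf, le_trans ?_ hlo, hup.trans ?_⟩
  · rw [← mul_div_assoc, div_le_div_iff_of_pos_right hb]
    linarith [le_abs_self (log 2 + d)]
  · have : |d| / b ≤ |d| / b * (log n / b) := le_mul_of_one_le_right (by positivity) hL
    have hd' : -d / b ≤ |d| / b := div_le_div_of_nonneg_right (neg_le_abs d) hb.le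
    rw [sub_div, add_mul, one_mul]
    linarith [neg_div b d]

end LogForm

/-- solving R(k) = C gives k = log_s n - (1/2)log_s log_s n + O(1). -/
theorem stmt_18 (p : ℝ) (hp : 1/2 < p) (hp1 : p < 1) (C₀ : ℝ) (hC₀ : 0 < C₀) :
    ∃ C : ℝ, ∃ N : ℕ, ∀ n : ℕ, N ≤ n → ∀ k : ℕ, 1 ≤ k →
      ((n : ℝ) - 2*k - 3) * (4*p*(1-p)) ^ k / Real.sqrt (Real.pi * k) = C₀ →
      |(k : ℝ) - (Real.logb (1/(4*p*(1-p))) n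
        - Real.logb (1/(4*p*(1-p))) (Real.logb (1/(4*p*(1-p))) n) / 2)| ≤ C := by
  simp only [← log_div_log]
  have hq : 0 < 4 * p * (1 - p) := by nlinarith
  set b := log (1 / (4 * p * (1 - p)))
  have hb : 0 < b := log_pos (by rw [lt_div_iff₀ hq]; nlinarith)
  obtain ⟨c, hc⟩ := exists_eventually_bounds_of_log_form hb C₀
  obtain ⟨N, hN⟩ := eventually_atTop.mp
    (tendsto_natCast_atTop_atTop.eventually ((eventually_gt_atTop 1).and hc))
  refine ⟨(log 2 + |log C₀| + (|log (π * (1 / 4))| + |log (π * c)|) / 2) / b, N,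
    fun n hn k hk heq => ?_⟩
  obtain ⟨hA, hlog⟩ := log_form_of_mul_pow_div_sqrt_eq hq hk hC₀ heq
  obtain ⟨hn1, hwin⟩ := hN n hn
  obtain ⟨hhalf, hlo, hhi⟩ := hwin k (by exact_mod_cast hk) hA hlog
  exact abs_sub_le_of_log_form hb hlog (log_pos hn1) hhalf (by norm_num) hlo hhi
end
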